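/- Let C be a real symmetric positive definite qm×qm matrix that is q-block-tridiagonal, with condition number 𝒞. Let Ω = C⁻¹ with block decomposition Ω = Ω_L + Ω_D + Ω_U, and G = −(Ω_L + Ω_D)⁻¹ Ω_U. Then G C Gᵀ ⪯ β·C with β = 2(1−𝒞⁻¹)²𝒞⁴ / (1 + 2(1−𝒞⁻¹)²𝒞⁴). -/

import Mathlib

/-!
Write `Ω = C⁻¹ = L + D + U` for its block splitting and `M = L + D`. Since `Ω` is symmetric,
`Uᵀ = L` and `M C Mᵀ = D + U C Uᵀ`, so after conjugating by `M` the claim becomes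
`U C Uᵀ ⪯ t D` with `t = β / (1 - β) = 2 (1 - 𝒞⁻¹)² 𝒞⁴`. The diagonal blocks of `Ω` dominate
`λ_max⁻¹`, so it is enough that `‖L x‖ ≤ (λ_max - λ_min) / λ_min² ‖x‖`.

The `j`-th block of `L x` is the `j`-th block of `Ω` applied to the part of `x` in the blocks
before `j`. Let `u_j` solve the leading principal subsystem of `C u = x` on those blocks. Then
`C u_j` agrees with `x` there, so the `j`-th block of `L x` is minus that of `Ω g_j`, where by
tridiagonality `g_j` is the coupling `C_{j,j-1}` applied to the increment `u_j - u_{j-1}`. The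
couplings have norm at most `λ_max - λ_min`. The increments satisfy
`∑ ‖u_j - u_{j-1}‖² ≤ ‖x‖² / λ_min²`: the energy `2⟨u, x⟩ - ⟨u, C u⟩` of `u_j` grows by at least
`λ_min ‖u_j - u_{j-1}‖²` at each step and never exceeds `‖x‖² / λ_min`.
-/

open Matrix

/-- Block strictly-lower-triangular part (with respect to `q × q` blocks). -/
def Matrix.blkLower {m q : ℕ} (Ω : Matrix (Fin m × Fin q) (Fin m × Fin q) ℝ) :
    Matrix (Fin m × Fin q) (Fin m × Fin q) ℝ :=
  Matrix.of fun p r => if r.1 < p.1 then Ω p r else 0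

/-- Block-diagonal part (with respect to `q × q` blocks). -/
def Matrix.blkDiag {m q : ℕ} (Ω : Matrix (Fin m × Fin q) (Fin m × Fin q) ℝ) :
    Matrix (Fin m × Fin q) (Fin m × Fin q) ℝ :=
  Matrix.of fun p r => if p.1 = r.1 then Ω p r else 0

/-- Block strictly-upper-triangular part (with respect to `q × q` blocks). -/
def Matrix.blkUpper {m q : ℕ} (Ω : Matrix (Fin m × Fin q) (Fin m × Fin q) ℝ) :
    Matrix (Fin m × Fin q) (Fin m × Fin q) ℝ :=
  Matrix.of fun p r => if p.1 < r.1 then Ω p r else 0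

namespace Matrix

section QuadraticForms

lemma PosSemidef.transpose_eq {n : Type*} {A : Matrix n n ℝ} (hA : A.PosSemidef) : Aᵀ = A := by
  simpa [conjTranspose_eq_transpose_of_trivial] using hA.1.eq

lemma le_of_posSemidef_sub_smul_one {n : Type*} [DecidableEq n] [Nonempty n] {C : Matrix n n ℝ}
    {a b : ℝ} (ha : (C - a • 1).PosSemidef) (hb : (b • 1 - C).PosSemidef) : a ≤ b := by
  simpa using (hb.add ha).diag_nonneg (i := Classical.arbitrary n)

variable {n : Type*} [Fintype n]

lemma dotProduct_self_nonneg (v : n → ℝ) : 0 ≤ v ⬝ᵥ v := by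
  simpa using dotProduct_self_star_nonneg v

lemma dotProduct_mulVec_comm_of_transpose_eq {A : Matrix n n ℝ} (hA : Aᵀ = A) (v w : n → ℝ) :
    v ⬝ᵥ A *ᵥ w = w ⬝ᵥ A *ᵥ v := by
  rw [dotProduct_mulVec, ← mulVec_transpose, hA, dotProduct_comm]

lemma PosSemidef.dotProduct_mulVec_self_nonneg {A : Matrix n n ℝ} (hA : A.PosSemidef)
    (v : n → ℝ) : 0 ≤ v ⬝ᵥ A *ᵥ v := by
  simpa using hA.dotProduct_mulVec_nonneg v

lemma PosSemidef.dotProduct_mulVec_sq_le {A : Matrix n n ℝ} (hA : A.PosSemidef) (v w : n → ℝ) :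
    (v ⬝ᵥ A *ᵥ w) ^ 2 ≤ (v ⬝ᵥ A *ᵥ v) * (w ⬝ᵥ A *ᵥ w) := by
  -- Cauchy–Schwarz for the semi-inner product `⟪v, w⟫ = (A *ᵥ w) ⬝ᵥ star v` induced by `A`.
  let _ := A.toSeminormedAddCommGroup hA
  let _ := A.toInnerProductSpace hA
  have h : ((A *ᵥ v) ⬝ᵥ star w) * ((A *ᵥ v) ⬝ᵥ star w)
      ≤ ((A *ᵥ w) ⬝ᵥ star w) * ((A *ᵥ v) ⬝ᵥ star v) := real_inner_mul_inner_self_le w v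
  rw [dotProduct_mulVec_comm_of_transpose_eq hA.transpose_eq v w]
  simp only [star_trivial, dotProduct_comm (A *ᵥ _)] at h
  linarith

lemma dotProduct_mulVec_le_of_posSemidef_sub {A B : Matrix n n ℝ} (h : (A - B).PosSemidef)
    (v : n → ℝ) : v ⬝ᵥ B *ᵥ v ≤ v ⬝ᵥ A *ᵥ v := by
  have := h.dotProduct_mulVec_self_nonneg v
  rw [sub_mulVec, dotProduct_sub] at this
  linarith

lemma dotProduct_mul_mul_transpose_mulVec (U C : Matrix n n ℝ) (x : n → ℝ) :
    x ⬝ᵥ (U * C * Uᵀ) *ᵥ x = Uᵀ *ᵥ x ⬝ᵥ C *ᵥ Uᵀ *ᵥ x := by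
  rw [← mulVec_mulVec, ← mulVec_mulVec, dotProduct_mulVec, ← mulVec_transpose]

variable [DecidableEq n] {C : Matrix n n ℝ}

lemma dotProduct_smul_one_mulVec (l : ℝ) (v : n → ℝ) :
    v ⬝ᵥ (l • 1 : Matrix n n ℝ) *ᵥ v = l * (v ⬝ᵥ v) := by
  simp [smul_mulVec]

lemma PosDef.mulVec_inv_mulVec (hC : C.PosDef) (v : n → ℝ) : C *ᵥ C⁻¹ *ᵥ v = v := by
  rw [mulVec_mulVec, mul_nonsing_inv _ ((isUnit_iff_isUnit_det C).mp hC.isUnit), one_mulVec]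

lemma PosDef.inv_mulVec_mulVec (hC : C.PosDef) (v : n → ℝ) : C⁻¹ *ᵥ C *ᵥ v = v := by
  rw [mulVec_mulVec, nonsing_inv_mul _ ((isUnit_iff_isUnit_det C).mp hC.isUnit), one_mulVec]

lemma sq_mul_dotProduct_self_le_of_posSemidef_sub {a : ℝ} (ha : 0 ≤ a)
    (hmin : (C - a • 1).PosSemidef) (w : n → ℝ) :
    a ^ 2 * (w ⬝ᵥ w) ≤ C *ᵥ w ⬝ᵥ C *ᵥ w := by
  have hCw : C *ᵥ w = a • w + (C - a • 1) *ᵥ w := by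
    rw [sub_mulVec, smul_mulVec, one_mulVec]; abel
  have hM := hmin.dotProduct_mulVec_self_nonneg w
  have hsq := dotProduct_self_nonneg ((C - a • 1) *ᵥ w)
  rw [hCw]
  simp only [add_dotProduct, dotProduct_add, smul_dotProduct, dotProduct_smul, smul_eq_mul,
    dotProduct_comm ((C - a • 1) *ᵥ w) w]
  nlinarith [mul_nonneg ha hM]

lemma dotProduct_self_le_mul_dotProduct_inv_mulVec (hC : C.PosDef) {b : ℝ}
    (hmax : (b • 1 - C).PosSemidef) (v : n → ℝ) : v ⬝ᵥ v ≤ b * (v ⬝ᵥ C⁻¹ *ᵥ v) := by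
  rcases eq_or_ne v 0 with rfl | hv0
  · simp
  set w := C⁻¹ *ᵥ v
  have hv : C *ᵥ w = v := hC.mulVec_inv_mulVec v
  have hcs := hC.posSemidef.dotProduct_mulVec_sq_le w v
  rw [dotProduct_mulVec_comm_of_transpose_eq hC.posSemidef.transpose_eq w v, hv,
    dotProduct_comm w v] at hcs
  have hvCv := dotProduct_mulVec_le_of_posSemidef_sub hmax v
  rw [dotProduct_smul_one_mulVec] at hvCv
  have hvv : 0 < v ⬝ᵥ v :=
    (dotProduct_self_nonneg v).lt_of_ne' (dotProduct_self_eq_zero.not.mpr hv0)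
  have hvw : 0 ≤ v ⬝ᵥ w := by
    simpa [hv, dotProduct_comm] using hC.posSemidef.dotProduct_mulVec_self_nonneg w
  nlinarith

lemma indicator_mulVec_dotProduct_self_le {a b : ℝ} (hmin : (C - a • 1).PosSemidef)
    (hmax : (b • 1 - C).PosSemidef) {T : Set n} {d : n → ℝ} (hd : ∀ p ∈ T, d p = 0) :
    T.indicator (C *ᵥ d) ⬝ᵥ T.indicator (C *ᵥ d) ≤ (b - a) ^ 2 * (d ⬝ᵥ d) := by
  set h := T.indicator (C *ᵥ d)
  set M := C - a • 1
  have hhd : h ⬝ᵥ d = 0 :=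
    Finset.sum_eq_zero fun p _ => by by_cases hp : p ∈ T <;> simp [h, hp, hd]
  have hhh : h ⬝ᵥ h = h ⬝ᵥ M *ᵥ d := by
    have : h ⬝ᵥ h = h ⬝ᵥ C *ᵥ d :=
      Finset.sum_congr rfl fun p _ => by by_cases hp : p ∈ T <;> simp [h, hp]
    rw [this, sub_mulVec, dotProduct_sub, smul_mulVec, one_mulVec, dotProduct_smul, hhd,
      smul_zero, sub_zero]
  have hMle : ∀ v, v ⬝ᵥ M *ᵥ v ≤ (b - a) * (v ⬝ᵥ v) := fun v => by
    have := dotProduct_mulVec_le_of_posSemidef_sub hmax v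
    rw [dotProduct_smul_one_mulVec] at this
    simp only [M, sub_mulVec, dotProduct_sub, smul_mulVec, one_mulVec, dotProduct_smul,
      smul_eq_mul]
    linarith
  have hcs := hmin.dotProduct_mulVec_sq_le h d
  rw [← hhh] at hcs
  have hh0 := hmin.dotProduct_mulVec_self_nonneg h
  have hd0 := hmin.dotProduct_mulVec_self_nonneg d
  rcases (dotProduct_self_nonneg h).eq_or_lt with hz | hpos
  · rw [← hz]; exact mul_nonneg (sq_nonneg _) (dotProduct_self_nonneg d)
  · have := (mul_le_mul_of_nonneg_right (hMle h) hd0).trans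
      (mul_le_mul_of_nonneg_left (hMle d) (hh0.trans (hMle h)))
    nlinarith

end QuadraticForms

section PrincipalSolutions

variable {n : Type*} [Fintype n] {C : Matrix n n ℝ}

/-- The solution of the principal subsystem of `C u = x` indexed by `s`, extended by zero. -/
structure IsPrincipalSolution (C : Matrix n n ℝ) (s : Set n) (x u : n → ℝ) : Prop where
  eq_zero : ∀ p ∉ s, u p = 0
  mulVec_apply : ∀ p ∈ s, (C *ᵥ u) p = x p

def energy (C : Matrix n n ℝ) (x w : n → ℝ) : ℝ := 2 * (w ⬝ᵥ x) - w ⬝ᵥ C *ᵥ w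

lemma IsPrincipalSolution.energy_sub {s : Set n} {x u : n → ℝ} (hC : Cᵀ = C)
    (hu : IsPrincipalSolution C s x u) {w : n → ℝ} (hw : ∀ p ∉ s, w p = 0) :
    energy C x u - energy C x w = (u - w) ⬝ᵥ C *ᵥ (u - w) := by
  have hx : (u - w) ⬝ᵥ x = (u - w) ⬝ᵥ C *ᵥ u :=
    Finset.sum_congr rfl fun p _ => by
      by_cases hp : p ∈ s
      · rw [hu.mulVec_apply p hp]
      · simp [hu.eq_zero p hp, hw p hp]
  have hsymm := dotProduct_mulVec_comm_of_transpose_eq hC u w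
  simp only [energy, sub_dotProduct, mulVec_sub, dotProduct_sub] at hx ⊢
  linarith

variable [DecidableEq n]

lemma PosDef.exists_isPrincipalSolution (hC : C.PosDef) (s : Set n) (x : n → ℝ) :
    ∃ u, IsPrincipalSolution C s x u := by
  classical
  set A := C.submatrix ((↑) : s → n) ((↑) : s → n)
  have hA : A.PosDef := hC.submatrix Subtype.val_injective
  set w := A⁻¹ *ᵥ fun p : s => x p
  refine ⟨fun p => if hp : p ∈ s then w ⟨p, hp⟩ else 0, fun p hp => dif_neg hp, fun p hp => ?_⟩
  rw [← congrFun (hA.mulVec_inv_mulVec fun p : s => x p) ⟨p, hp⟩]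
  simp only [mulVec, dotProduct, mul_dite, mul_zero]
  rw [← Fintype.sum_subtype_add_sum_subtype (· ∈ s),
    Finset.sum_eq_zero fun (i : {a // a ∉ s}) _ => dif_neg i.2, add_zero]
  exact Finset.sum_congr rfl fun i _ => dif_pos i.2

lemma IsPrincipalSolution.inv_mulVec_indicator_apply {s : Set n} {x u : n → ℝ} (hC : C.PosDef)
    (hu : IsPrincipalSolution C s x u) {p : n} (hp : p ∉ s) :
    (C⁻¹ *ᵥ s.indicator x) p = -(C⁻¹ *ᵥ sᶜ.indicator (C *ᵥ u)) p := by
  have hCu : C *ᵥ u = s.indicator x + sᶜ.indicator (C *ᵥ u) := by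
    ext r
    by_cases hr : r ∈ s <;> simp [hr, hu.mulVec_apply]
  have h := congrFun (hC.inv_mulVec_mulVec u) p
  rw [hCu, mulVec_add, hu.eq_zero p hp, Pi.add_apply] at h
  linarith

lemma energy_le {a : ℝ} (ha : 0 < a) (hmin : (C - a • 1).PosSemidef) (x w : n → ℝ) :
    energy C x w ≤ (x ⬝ᵥ x) / a := by
  have hw := dotProduct_mulVec_le_of_posSemidef_sub hmin w
  rw [dotProduct_smul_one_mulVec] at hw
  have hsq := dotProduct_self_nonneg (x - a • w)
  simp only [dotProduct_sub, sub_dotProduct, dotProduct_smul, smul_dotProduct, smul_eq_mul,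
    dotProduct_comm x w] at hsq
  rw [energy, le_div_iff₀ ha]
  nlinarith

lemma sq_mul_sum_dotProduct_sub_le {a : ℝ} (ha : 0 < a) (hC : Cᵀ = C)
    (hmin : (C - a • 1).PosSemidef) {S : ℕ → Set n} (hS : Monotone S) {x : n → ℝ} {u : ℕ → n → ℝ}
    (hu : ∀ k, IsPrincipalSolution C (S k) x (u k)) (N : ℕ) :
    a ^ 2 * ∑ k ∈ Finset.range N, (u (k + 1) - u k) ⬝ᵥ (u (k + 1) - u k) ≤ x ⬝ᵥ x := by
  have hform (v : n → ℝ) : a * (v ⬝ᵥ v) ≤ v ⬝ᵥ C *ᵥ v := by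
    simpa [dotProduct_smul_one_mulVec] using dotProduct_mulVec_le_of_posSemidef_sub hmin v
  have hstep (k : ℕ) : a * ((u (k + 1) - u k) ⬝ᵥ (u (k + 1) - u k))
      ≤ energy C x (u (k + 1)) - energy C x (u k) := by
    rw [(hu (k + 1)).energy_sub hC fun p hp => (hu k).eq_zero p fun h => hp (hS k.le_succ h)]
    exact hform _
  have hzero : 0 ≤ energy C x (u 0) := by
    have h := (hu 0).energy_sub hC (w := 0) fun _ _ => rfl
    simp only [energy, zero_dotProduct, mulVec_zero, mul_zero, sub_zero, sub_self] at h
    rw [energy, h]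
    exact (mul_nonneg ha.le (dotProduct_self_nonneg _)).trans (hform _)
  calc a ^ 2 * ∑ k ∈ Finset.range N, (u (k + 1) - u k) ⬝ᵥ (u (k + 1) - u k)
      = a * ∑ k ∈ Finset.range N, a * ((u (k + 1) - u k) ⬝ᵥ (u (k + 1) - u k)) := by
        rw [← Finset.mul_sum]; ring
    _ ≤ a * (energy C x (u N) - energy C x (u 0)) := by
        rw [← Finset.sum_range_sub fun k => energy C x (u k)]
        exact mul_le_mul_of_nonneg_left (Finset.sum_le_sum fun k _ => hstep k) ha.le
    _ ≤ a * ((x ⬝ᵥ x) / a) := by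
        gcongr
        linarith [energy_le ha hmin x (u N)]
    _ = x ⬝ᵥ x := by field_simp

end PrincipalSolutions

section GaussSeidelSplitting

variable {n : Type*} [Fintype n] [DecidableEq n]

lemma add_mul_mul_transpose_add {C L D U : Matrix n n ℝ} (hΩC : (L + D + U) * C = 1)
    (hCΩ : C * (L + D + U) = 1) (hU : Uᵀ = L) (hD : Dᵀ = D) :
    (L + D) * C * (L + D)ᵀ = D + U * C * Uᵀ := by
  have hMt : (L + D)ᵀ = (L + D + U) - L := by
    rw [transpose_add, hD, ← hU, transpose_transpose]; abel
  have e : (L + D) * C * (L + D + U - L)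
      = (L + D + U) * C * (L + D + U) - (L + D + U) * C * L - U * (C * (L + D + U))
        + U * C * L := by noncomm_ring
  rw [hMt, e, hΩC, hCΩ, one_mul, one_mul, mul_one, hU]
  abel

lemma smul_sub_mul_mul_transpose_eq_inv_conj {M U C : Matrix n n ℝ} (hM : IsUnit M) (β : ℝ) :
    β • C - (-(M⁻¹ * U)) * C * (-(M⁻¹ * U))ᵀ
      = M⁻¹ * (β • (M * C * Mᵀ) - U * C * Uᵀ) * M⁻¹ᵀ := by
  have h : M⁻¹ * M = 1 := nonsing_inv_mul M ((isUnit_iff_isUnit_det M).mp hM)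
  have ht : Mᵀ * M⁻¹ᵀ = 1 := by rw [← transpose_mul, h, transpose_one]
  simp only [transpose_neg, transpose_mul, neg_mul, mul_neg, neg_neg, Matrix.mul_sub,
    Matrix.sub_mul, Matrix.mul_smul, Matrix.smul_mul, Matrix.mul_assoc, ht, mul_one]
  simp only [← Matrix.mul_assoc, h, one_mul]

end GaussSeidelSplitting

section Blocks

variable {m q : ℕ}

def leadingBlocks (j : ℕ) : Set (Fin m × Fin q) := {p | (p.1 : ℕ) < j}

lemma monotone_leadingBlocks : Monotone (leadingBlocks (m := m) (q := q)) :=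
  fun _ _ hjk _ hp => lt_of_lt_of_le hp hjk

lemma blkLower_mulVec_apply (A : Matrix (Fin m × Fin q) (Fin m × Fin q) ℝ)
    (x : Fin m × Fin q → ℝ) (p : Fin m × Fin q) :
    (A.blkLower *ᵥ x) p = (A *ᵥ (leadingBlocks p.1).indicator x) p := by
  refine Finset.sum_congr rfl fun r _ => ?_
  simp only [blkLower, of_apply, Set.indicator_apply, leadingBlocks, Set.mem_ofPred_eq,
    Fin.val_fin_lt]
  split_ifs <;> simp

lemma transpose_blkUpper (A : Matrix (Fin m × Fin q) (Fin m × Fin q) ℝ) :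
    A.blkUpperᵀ = Aᵀ.blkLower := by
  ext p r
  simp [blkUpper, blkLower]

lemma transpose_blkDiag (A : Matrix (Fin m × Fin q) (Fin m × Fin q) ℝ) :
    A.blkDiagᵀ = Aᵀ.blkDiag := by
  ext p r
  simp [blkDiag, eq_comm]

lemma blkLower_add_blkDiag_add_blkUpper (A : Matrix (Fin m × Fin q) (Fin m × Fin q) ℝ) :
    A.blkLower + A.blkDiag + A.blkUpper = A := by
  ext p r
  simp only [Matrix.add_apply, blkLower, blkDiag, blkUpper, of_apply]
  rcases lt_trichotomy p.1 r.1 with h | h | h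
  · simp [h, h.ne, h.not_gt]
  · simp [h]
  · simp [h, h.ne', h.not_gt]

lemma dotProduct_blkDiag_mulVec (A : Matrix (Fin m × Fin q) (Fin m × Fin q) ℝ)
    (x : Fin m × Fin q → ℝ) :
    x ⬝ᵥ A.blkDiag *ᵥ x
      = ∑ j : Fin m, {p | p.1 = j}.indicator x ⬝ᵥ A *ᵥ {p | p.1 = j}.indicator x := by
  simp only [dotProduct, mulVec, blkDiag, of_apply, Set.indicator_apply, Set.mem_ofPred_eq,
    Finset.mul_sum]
  symm
  rw [Finset.sum_comm]
  refine Finset.sum_congr rfl fun p _ => ?_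
  rw [Finset.sum_comm]
  refine Finset.sum_congr rfl fun r _ => ?_
  by_cases h : p.1 = r.1 <;> simp [h, ite_mul, mul_ite]

lemma dotProduct_self_eq_sum_blocks (x : Fin m × Fin q → ℝ) :
    x ⬝ᵥ x = ∑ j : Fin m, {p | p.1 = j}.indicator x ⬝ᵥ {p | p.1 = j}.indicator x := by
  simp only [dotProduct, Set.indicator_apply, Set.mem_ofPred_eq]
  symm
  rw [Finset.sum_comm]
  simp [ite_mul, mul_ite]

lemma dotProduct_self_le_sum_range (F : ℕ → Fin m × Fin q → ℝ) :
    (fun p => F p.1 p) ⬝ᵥ (fun p => F p.1 p) ≤ ∑ j ∈ Finset.range m, F j ⬝ᵥ F j := by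
  rw [← Fin.sum_univ_eq_sum_range (fun j => F j ⬝ᵥ F j), dotProduct, Fintype.sum_prod_type]
  refine Finset.sum_le_sum fun j _ => ?_
  rw [dotProduct, Fintype.sum_prod_type]
  exact Finset.single_le_sum (f := fun k => ∑ i, F j (k, i) * F j (k, i))
    (fun _ _ => Finset.sum_nonneg fun _ _ => mul_self_nonneg _) (Finset.mem_univ j)

variable {C : Matrix (Fin m × Fin q) (Fin m × Fin q) ℝ}

lemma indicator_compl_leadingBlocks_mulVec_eq_zero
    (htri : ∀ p r : Fin m × Fin q, 1 < |(p.1 : ℤ) - (r.1 : ℤ)| → C p r = 0) {j : ℕ}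
    {u : Fin m × Fin q → ℝ} (hu : ∀ p ∉ leadingBlocks j, u p = 0) :
    (leadingBlocks (j + 1))ᶜ.indicator (C *ᵥ u) = 0 := by
  ext p
  by_cases hp : p ∈ leadingBlocks (j + 1)
  · simp [hp]
  rw [Set.indicator_of_mem hp, Pi.zero_apply]
  refine Finset.sum_eq_zero fun r _ => ?_
  by_cases hr : r ∈ leadingBlocks j
  · simp only [leadingBlocks, Set.mem_ofPred_eq, not_lt] at hp hr
    simp only [htri p r (by rw [lt_abs]; omega), zero_mul]
  · rw [hu r hr, mul_zero]

lemma indicator_compl_leadingBlocks_mulVec_dotProduct_self_le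
    (htri : ∀ p r : Fin m × Fin q, 1 < |(p.1 : ℤ) - (r.1 : ℤ)| → C p r = 0) {a b : ℝ}
    (hmin : (C - a • 1).PosSemidef) (hmax : (b • 1 - C).PosSemidef) {k : ℕ}
    {u v : Fin m × Fin q → ℝ} (hu : ∀ p ∉ leadingBlocks (k + 1), u p = 0)
    (hv : ∀ p ∉ leadingBlocks k, v p = 0) :
    (leadingBlocks (k + 1))ᶜ.indicator (C *ᵥ u) ⬝ᵥ (leadingBlocks (k + 1))ᶜ.indicator (C *ᵥ u)
      ≤ (b - a) ^ 2 * ((u - v) ⬝ᵥ (u - v)) := by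
  have hcoupling : (leadingBlocks (k + 1))ᶜ.indicator (C *ᵥ u)
      = (leadingBlocks (k + 1))ᶜ.indicator (C *ᵥ (u - v)) := by
    rw [mulVec_sub, Set.indicator_sub', indicator_compl_leadingBlocks_mulVec_eq_zero htri hv,
      sub_zero]
  rw [hcoupling]
  refine indicator_mulVec_dotProduct_self_le hmin hmax fun p hp => ?_
  rw [Pi.sub_apply, hu p hp, hv p fun h => hp (monotone_leadingBlocks k.le_succ h), sub_zero]

lemma blkLower_inv_mulVec_dotProduct_self_le (hC : C.PosDef)
    (htri : ∀ p r : Fin m × Fin q, 1 < |(p.1 : ℤ) - (r.1 : ℤ)| → C p r = 0) {a b : ℝ}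
    (ha : 0 < a) (hmin : (C - a • 1).PosSemidef) (hmax : (b • 1 - C).PosSemidef)
    (x : Fin m × Fin q → ℝ) :
    a ^ 4 * (C⁻¹.blkLower *ᵥ x ⬝ᵥ C⁻¹.blkLower *ᵥ x) ≤ (b - a) ^ 2 * (x ⬝ᵥ x) := by
  choose u hu using fun j => hC.exists_isPrincipalSolution (leadingBlocks j) x
  set g : ℕ → Fin m × Fin q → ℝ := fun j => (leadingBlocks j)ᶜ.indicator (C *ᵥ u j)
  have hLx : C⁻¹.blkLower *ᵥ x = fun p => (-(C⁻¹ *ᵥ g p.1)) p := by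
    ext p
    rw [blkLower_mulVec_apply]
    exact (hu p.1).inv_mulVec_indicator_apply hC (lt_irrefl (p.1 : ℕ))
  have hg_zero : g 0 = 0 := by
    have hu0 : u 0 = 0 := funext fun p => (hu 0).eq_zero p (Nat.not_lt_zero _)
    simp [g, hu0]
  have hCinv (j : ℕ) : a ^ 2 * (C⁻¹ *ᵥ g j ⬝ᵥ C⁻¹ *ᵥ g j) ≤ g j ⬝ᵥ g j := by
    simpa only [hC.mulVec_inv_mulVec] using
      sq_mul_dotProduct_self_le_of_posSemidef_sub ha.le hmin (C⁻¹ *ᵥ g j)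
  calc a ^ 4 * (C⁻¹.blkLower *ᵥ x ⬝ᵥ C⁻¹.blkLower *ᵥ x)
      ≤ a ^ 2 * ∑ j ∈ Finset.range m, a ^ 2 * (C⁻¹ *ᵥ g j ⬝ᵥ C⁻¹ *ᵥ g j) := by
        rw [hLx, ← Finset.mul_sum, ← mul_assoc, ← pow_add]
        gcongr
        simpa using dotProduct_self_le_sum_range fun j => -(C⁻¹ *ᵥ g j)
    -- `g 0 = 0`, so the sum can be reindexed to pair `g (k + 1)` with `u (k + 1) - u k`.
    _ ≤ a ^ 2 * ∑ j ∈ Finset.range (m + 1), g j ⬝ᵥ g j := by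
        gcongr
        refine (Finset.sum_le_sum fun j _ => hCinv j).trans ?_
        exact Finset.sum_le_sum_of_subset_of_nonneg (Finset.range_subset_range.mpr m.le_succ)
          fun j _ _ => dotProduct_self_nonneg (g j)
    _ = a ^ 2 * ∑ k ∈ Finset.range m, g (k + 1) ⬝ᵥ g (k + 1) := by
        rw [Finset.sum_range_succ', hg_zero, zero_dotProduct, add_zero]
    _ ≤ a ^ 2 * ∑ k ∈ Finset.range m,
          (b - a) ^ 2 * ((u (k + 1) - u k) ⬝ᵥ (u (k + 1) - u k)) := by
        gcongr with k
        exact indicator_compl_leadingBlocks_mulVec_dotProduct_self_le htri hmin hmax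
          (hu (k + 1)).eq_zero (hu k).eq_zero
    _ = (b - a) ^ 2 *
          (a ^ 2 * ∑ k ∈ Finset.range m, (u (k + 1) - u k) ⬝ᵥ (u (k + 1) - u k)) := by
        rw [← Finset.mul_sum]; ring
    _ ≤ (b - a) ^ 2 * (x ⬝ᵥ x) := by
        gcongr
        exact sq_mul_sum_dotProduct_sub_le ha hC.posSemidef.transpose_eq hmin
          monotone_leadingBlocks hu m

lemma dotProduct_self_le_mul_dotProduct_blkDiag_inv_mulVec (hC : C.PosDef) {b : ℝ}
    (hmax : (b • 1 - C).PosSemidef) (x : Fin m × Fin q → ℝ) :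
    x ⬝ᵥ x ≤ b * (x ⬝ᵥ C⁻¹.blkDiag *ᵥ x) := by
  rw [dotProduct_blkDiag_mulVec, dotProduct_self_eq_sum_blocks, Finset.mul_sum]
  exact Finset.sum_le_sum fun j _ => dotProduct_self_le_mul_dotProduct_inv_mulVec hC hmax _

lemma blkLower_inv_mulVec_dotProduct_mulVec_le (hC : C.PosDef)
    (htri : ∀ p r : Fin m × Fin q, 1 < |(p.1 : ℤ) - (r.1 : ℤ)| → C p r = 0) {a b : ℝ}
    (ha : 0 < a) (hab : a ≤ b) (hmin : (C - a • 1).PosSemidef) (hmax : (b • 1 - C).PosSemidef)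
    (x : Fin m × Fin q → ℝ) :
    C⁻¹.blkLower *ᵥ x ⬝ᵥ C *ᵥ C⁻¹.blkLower *ᵥ x
      ≤ 2 * (1 - (b / a)⁻¹) ^ 2 * (b / a) ^ 4 * (x ⬝ᵥ C⁻¹.blkDiag *ᵥ x) := by
  have hb : 0 < b := ha.trans_le hab
  have hyCy := dotProduct_mulVec_le_of_posSemidef_sub hmax (C⁻¹.blkLower *ᵥ x)
  rw [dotProduct_smul_one_mulVec] at hyCy
  have hy := blkLower_inv_mulVec_dotProduct_self_le hC htri ha hmin hmax x
  have hx := dotProduct_self_le_mul_dotProduct_blkDiag_inv_mulVec hC hmax x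
  have hD : 0 ≤ x ⬝ᵥ C⁻¹.blkDiag *ᵥ x :=
    nonneg_of_mul_nonneg_right ((dotProduct_self_nonneg x).trans hx) hb
  have hcoeff : 2 * (1 - (b / a)⁻¹) ^ 2 * (b / a) ^ 4 = 2 * b ^ 2 * (b - a) ^ 2 / a ^ 4 := by
    field_simp
  rw [hcoeff, div_mul_eq_mul_div, le_div_iff₀ (by positivity)]
  nlinarith [mul_le_mul_of_nonneg_left hyCy (by positivity : (0 : ℝ) ≤ a ^ 4),
    mul_le_mul_of_nonneg_left hy hb.le,
    mul_le_mul_of_nonneg_left hx (by positivity : (0 : ℝ) ≤ b * (b - a) ^ 2),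
    mul_nonneg (by positivity : (0 : ℝ) ≤ b ^ 2 * (b - a) ^ 2) hD]

end Blocks

end Matrix

lemma div_one_add_mul_add_sub_nonneg {t a b : ℝ} (ht : 0 ≤ t) (h : b ≤ t * a) :
    0 ≤ t / (1 + t) * (a + b) - b := by
  have : t / (1 + t) * (a + b) - b = (t * a - b) / (1 + t) := by field_simp; ring
  rw [this]
  exact div_nonneg (by linarith) (by linarith)

/-- if `C` is symmetric positive definite and `q`-block-tridiagonal with
extreme eigenvalues `λ_min ≤ λ_max` (Loewner order) and condition number `𝒞 = λ_max/λ_min`,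
and `Ω = C⁻¹` has block decomposition `Ω = Ω_L + Ω_D + Ω_U`, then the Gauss–Seidel operator
`G = -(Ω_L + Ω_D)⁻¹ Ω_U` satisfies `G C Gᵀ ⪯ β C` with
`β = 2(1 - 𝒞⁻¹)²𝒞⁴ / (1 + 2(1 - 𝒞⁻¹)²𝒞⁴)`. -/
theorem gaussSeidel_contraction_of_blockTridiagonal_covariance
    {m q : ℕ} (C : Matrix (Fin m × Fin q) (Fin m × Fin q) ℝ) (hC : C.PosDef)
    (htri : ∀ p r : Fin m × Fin q, 1 < |(p.1 : ℤ) - (r.1 : ℤ)| → C p r = 0)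
    (lmin lmax : ℝ) (hlmin : 0 < lmin)
    (hmin : (C - lmin • (1 : Matrix (Fin m × Fin q) (Fin m × Fin q) ℝ)).PosSemidef)
    (hmax : ((lmax • (1 : Matrix (Fin m × Fin q) (Fin m × Fin q) ℝ)) - C).PosSemidef)
    (hInv : IsUnit (C⁻¹.blkLower + C⁻¹.blkDiag)) :
    (((2 * (1 - (lmax / lmin)⁻¹) ^ 2 * (lmax / lmin) ^ 4) /
          (1 + 2 * (1 - (lmax / lmin)⁻¹) ^ 2 * (lmax / lmin) ^ 4)) • C -
        (-((C⁻¹.blkLower + C⁻¹.blkDiag)⁻¹ * C⁻¹.blkUpper)) * C *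
          (-((C⁻¹.blkLower + C⁻¹.blkDiag)⁻¹ * C⁻¹.blkUpper))ᵀ).PosSemidef := by
  rcases isEmpty_or_nonempty (Fin m × Fin q) with _ | _
  · convert PosSemidef.zero (n := Fin m × Fin q) (R := ℝ)
    exact Subsingleton.elim _ _
  have hCt := hC.posSemidef.transpose_eq
  have hΩt : C⁻¹ᵀ = C⁻¹ := by rw [transpose_nonsing_inv, hCt]
  have hdet : IsUnit C.det := (isUnit_iff_isUnit_det C).mp hC.isUnit
  have hdec := blkLower_add_blkDiag_add_blkUpper C⁻¹
  have hU : C⁻¹.blkUpperᵀ = C⁻¹.blkLower := by rw [transpose_blkUpper, hΩt]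
  have hD : C⁻¹.blkDiagᵀ = C⁻¹.blkDiag := by rw [transpose_blkDiag, hΩt]
  have hΩC : (C⁻¹.blkLower + C⁻¹.blkDiag + C⁻¹.blkUpper) * C = 1 := by
    rw [hdec, nonsing_inv_mul C hdet]
  have hCΩ : C * (C⁻¹.blkLower + C⁻¹.blkDiag + C⁻¹.blkUpper) = 1 := by
    rw [hdec, mul_nonsing_inv C hdet]
  rw [smul_sub_mul_mul_transpose_eq_inv_conj hInv, add_mul_mul_transpose_add hΩC hCΩ hU hD,
    ← conjTranspose_eq_transpose_of_trivial (C⁻¹.blkLower + C⁻¹.blkDiag)⁻¹]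
  refine PosSemidef.mul_mul_conjTranspose_same (.of_dotProduct_mulVec_nonneg ?_ fun x => ?_) _
  · simp [IsHermitian, conjTranspose_eq_transpose_of_trivial, transpose_mul, hD, hCt,
      Matrix.mul_assoc]
  · rw [star_trivial, sub_mulVec, smul_mulVec, add_mulVec, dotProduct_sub, dotProduct_smul,
      dotProduct_add, dotProduct_mul_mul_transpose_mulVec, hU, smul_eq_mul]
    exact div_one_add_mul_add_sub_nonneg (by positivity)
      (blkLower_inv_mulVec_dotProduct_mulVec_le hC htri hlmin
        (le_of_posSemidef_sub_smul_one hmin hmax) hmin hmax x)
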